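/- Key single-letterization inequality from the more capable converse: For jointly distributed discrete random vectors M1,...,M5, Y1^n, Y2^n with finite ranges, defining U_i = (M1, M3, M4, M5, Y1^{i-1}, Y2,i+1^n), we have I(M2; Y1^n | M1, M3, M4, M5) + I(M1, M3, M5; Y2^n | M4) ≤ sum_{i=1}^n [ I(M2; Y1,i | U_i) + I(U_i; Y2,i) ]. -/

import Mathlib

open scoped BigOperators Classical

noncomputable section

/-- Probability that the random variable `X` takes value `x`, under weights `μ`. -/
def pOf {Ω α : Type*} [Fintype Ω] (μ : Ω → ℝ) (X : Ω → α) (x : α) : ℝ :=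
  ∑ ω, if X ω = x then μ ω else 0

/-- Shannon entropy of a discrete random variable `X` with finite range. -/
def Hsh {Ω α : Type*} [Fintype Ω] [Fintype α] (μ : Ω → ℝ) (X : Ω → α) : ℝ :=
  -∑ x, pOf μ X x * Real.log (pOf μ X x)

/-- Conditional entropy `H(X | Y)`. -/
def Hc {Ω α β : Type*} [Fintype Ω] [Fintype α] [Fintype β]
    (μ : Ω → ℝ) (X : Ω → α) (Y : Ω → β) : ℝ :=
  Hsh μ (fun ω => (X ω, Y ω)) - Hsh μ Y

/-- Mutual information `I(X ; Y)`. -/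
def MI {Ω α β : Type*} [Fintype Ω] [Fintype α] [Fintype β]
    (μ : Ω → ℝ) (X : Ω → α) (Y : Ω → β) : ℝ :=
  Hsh μ X + Hsh μ Y - Hsh μ (fun ω => (X ω, Y ω))

/-- Conditional mutual information `I(X ; Y | Z)`. -/
def CMI {Ω α β γ : Type*} [Fintype Ω] [Fintype α] [Fintype β] [Fintype γ]
    (μ : Ω → ℝ) (X : Ω → α) (Y : Ω → β) (Z : Ω → γ) : ℝ :=
  Hsh μ (fun ω => (X ω, Z ω)) + Hsh μ (fun ω => (Y ω, Z ω))
    - Hsh μ (fun ω => (X ω, Y ω, Z ω)) - Hsh μ Z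

/-- `μ` is a probability mass function on the finite sample space `Ω`. -/
def IsProb {Ω : Type*} [Fintype Ω] (μ : Ω → ℝ) : Prop :=
  (∀ ω, 0 ≤ μ ω) ∧ ∑ ω, μ ω = 1

end

/-!
Write `W = (M1, M3, M4, M5)`, `T = (M1, M3, M5)`, `Pᵢ = Y1^{i-1}` and `Sᵢ = Y2_{i+1}^n`. The chain
rule, applied to `Y1` from the front and to `Y2` from the back, splits the left-hand side into
`∑ I(M2; Y1ᵢ | W, Pᵢ) + ∑ I(T; Y2ᵢ | M4, Sᵢ)`. Each term of the first sum is at most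
`I(Sᵢ; Y1ᵢ | W, Pᵢ) + I(M2; Y1ᵢ | Uᵢ)`, and by the Csiszár sum identity the terms
`I(Sᵢ; Y1ᵢ | W, Pᵢ)` add up to `∑ I(Pᵢ; Y2ᵢ | W, Sᵢ)`. The chain rule merges these with the
second sum into `∑ I(T, Pᵢ; Y2ᵢ | M4, Sᵢ)`, which is at most `∑ I(Uᵢ; Y2ᵢ)`.

Entropies see a variable only through the partition of `Ω` into its fibres, so tuples of
variables are regrouped up to `SameFibers`.
-/

open Finset Real

def SameFibers {Ω α β : Type*} (X : Ω → α) (X' : Ω → β) : Prop :=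
  ∀ ω ω', X ω = X ω' ↔ X' ω = X' ω'

namespace SameFibers

variable {Ω α β γ δ : Type*} {X : Ω → α} {X' : Ω → β} {Y : Ω → γ} {Y' : Ω → δ}

protected theorem rfl : SameFibers X X := fun _ _ => Iff.rfl

theorem prodMk (hX : SameFibers X X') (hY : SameFibers Y Y') :
    SameFibers (fun ω => (X ω, Y ω)) (fun ω => (X' ω, Y' ω)) := fun ω ω' => by
  simp only [Prod.mk.injEq, hX ω ω', hY ω ω']

end SameFibers

section Entropy

variable {Ω α β γ δ : Type*} [Fintype Ω] (μ : Ω → ℝ)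

theorem sum_pOf_mul [Fintype α] (X : Ω → α) (F : α → ℝ) :
    ∑ a, pOf μ X a * F a = ∑ ω, μ ω * F (X ω) := by
  simp only [pOf, sum_mul, ite_mul, zero_mul]
  rw [sum_comm]
  simp

theorem sum_pOf [Fintype α] (X : Ω → α) : ∑ a, pOf μ X a = ∑ ω, μ ω := by
  simpa using sum_pOf_mul μ X 1

theorem sum_pOf_pair [Fintype α] (X : Ω → α) (Z : Ω → γ) (z : γ) :
    ∑ x, pOf μ (fun ω => (X ω, Z ω)) (x, z) = pOf μ Z z := by
  simp only [pOf, Prod.mk.injEq, ite_and]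
  rw [sum_comm]
  simp

theorem pOf_nonneg (h0 : ∀ ω, 0 ≤ μ ω) (X : Ω → α) (a : α) : 0 ≤ pOf μ X a :=
  sum_nonneg fun ω _ => by split_ifs <;> simp [h0 ω]

theorem le_pOf_self (h0 : ∀ ω, 0 ≤ μ ω) (X : Ω → α) (ω : Ω) : μ ω ≤ pOf μ X (X ω) := by
  unfold pOf
  simpa using single_le_sum (f := fun ω' => if X ω' = X ω then μ ω' else 0)
    (fun ω' _ => by split_ifs <;> simp [h0 ω']) (mem_univ ω)

theorem Hsh_eq_neg_sum [Fintype α] (X : Ω → α) :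
    Hsh μ X = -∑ ω, μ ω * log (pOf μ X (X ω)) := by
  rw [Hsh, sum_pOf_mul μ X fun a => log (pOf μ X a)]

theorem pOf_self_congr {X : Ω → α} {X' : Ω → β} (h : SameFibers X X') (ω : Ω) :
    pOf μ X (X ω) = pOf μ X' (X' ω) := by
  simp only [pOf, h _ ω]

theorem Hsh_congr [Fintype α] [Fintype β] {X : Ω → α} {X' : Ω → β} (h : SameFibers X X') :
    Hsh μ X = Hsh μ X' := by
  simp only [Hsh_eq_neg_sum, pOf_self_congr μ h]

theorem sum_mul_div_eq {K : Type*} [DivisionSemiring K] [Fintype α] [Fintype β] [Fintype γ]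
    (f : α → γ → K) (g : β → γ → K) (h : γ → K) :
    ∑ v : α × β × γ, f v.1 v.2.2 * g v.2.1 v.2.2 / h v.2.2
      = ∑ z, (∑ x, f x z) * (∑ y, g y z) / h z := by
  simp only [Fintype.sum_prod_type, sum_mul_sum, sum_div]
  exact (sum_comm.trans (sum_congr rfl fun _ _ => sum_comm)).symm

theorem CMI_nonneg (h0 : ∀ ω, 0 ≤ μ ω) [Fintype α] [Fintype β] [Fintype γ]
    (X : Ω → α) (Y : Ω → β) (Z : Ω → γ) : 0 ≤ CMI μ X Y Z := by
  set pXZ := pOf μ (fun ω => (X ω, Z ω))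
  set pYZ := pOf μ (fun ω => (Y ω, Z ω))
  set pXYZ := pOf μ (fun ω => (X ω, Y ω, Z ω))
  set pZ := pOf μ Z
  set ratio : α × β × γ → ℝ := fun v =>
    pXZ (v.1, v.2.2) * pYZ (v.2.1, v.2.2) / (pXYZ v * pZ v.2.2)
  -- Gibbs' inequality: `log t ≤ t - 1` at `t = ratio`, whose `μ`-average is at most the total
  -- mass of `μ`.
  have hpoint : ∀ ω, μ ω * (log (pXZ (X ω, Z ω)) + log (pYZ (Y ω, Z ω))
      - log (pXYZ (X ω, Y ω, Z ω)) - log (pZ (Z ω))) ≤ μ ω * ratio (X ω, Y ω, Z ω) - μ ω := by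
    intro ω
    rcases (h0 ω).eq_or_lt with hμω | hμω
    · simp [← hμω]
    have ha := hμω.trans_le (le_pOf_self μ h0 (fun ω => (X ω, Z ω)) ω)
    have hb := hμω.trans_le (le_pOf_self μ h0 (fun ω => (Y ω, Z ω)) ω)
    have hc := hμω.trans_le (le_pOf_self μ h0 (fun ω => (X ω, Y ω, Z ω)) ω)
    have hd := hμω.trans_le (le_pOf_self μ h0 Z ω)
    have hlog := log_le_sub_one_of_pos (show 0 < ratio (X ω, Y ω, Z ω) by positivity)
    rw [log_div (by positivity) (by positivity), log_mul ha.ne' hb.ne',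
      log_mul hc.ne' hd.ne'] at hlog
    linarith [mul_le_mul_of_nonneg_left hlog hμω.le]
  have hmass : ∑ ω, μ ω * ratio (X ω, Y ω, Z ω) ≤ ∑ ω, μ ω := by
    rw [← sum_pOf_mul μ (fun ω => (X ω, Y ω, Z ω)) ratio]
    calc ∑ v, pXYZ v * ratio v
        ≤ ∑ v : α × β × γ, pXZ (v.1, v.2.2) * pYZ (v.2.1, v.2.2) / pZ v.2.2 := by
          refine sum_le_sum fun v _ => ?_
          rcases eq_or_ne (pXYZ v) 0 with hv | hv
          · rw [hv, zero_mul]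
            exact div_nonneg (mul_nonneg (pOf_nonneg μ h0 _ _) (pOf_nonneg μ h0 _ _))
              (pOf_nonneg μ h0 _ _)
          · exact le_of_eq (by simp only [ratio]; field_simp)
      _ = ∑ z, pZ z * pZ z / pZ z := by
          rw [sum_mul_div_eq (fun x z => pXZ (x, z)) (fun y z => pYZ (y, z)) pZ]
          simp only [pXZ, pYZ, sum_pOf_pair]
          rfl
      _ = ∑ z, pZ z := sum_congr rfl fun z _ => mul_self_div_self (pZ z)
      _ = ∑ ω, μ ω := sum_pOf μ Z
  have hsum := sum_le_sum fun ω (_ : ω ∈ univ) => hpoint ω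
  simp only [mul_add, mul_sub, sum_add_distrib, sum_sub_distrib] at hsum
  rw [CMI, Hsh_eq_neg_sum, Hsh_eq_neg_sum, Hsh_eq_neg_sum, Hsh_eq_neg_sum]
  linarith

theorem CMI_congr [Fintype α] [Fintype β] [Fintype γ] {α' β' γ' : Type*} [Fintype α']
    [Fintype β'] [Fintype γ'] {X : Ω → α} {X' : Ω → α'} {Y : Ω → β} {Y' : Ω → β'}
    {Z : Ω → γ} {Z' : Ω → γ'} (hX : SameFibers X X') (hY : SameFibers Y Y')
    (hZ : SameFibers Z Z') : CMI μ X Y Z = CMI μ X' Y' Z' := by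
  rw [CMI, CMI, Hsh_congr μ (hX.prodMk hZ), Hsh_congr μ (hY.prodMk hZ),
    Hsh_congr μ (hX.prodMk (hY.prodMk hZ)), Hsh_congr μ hZ]

theorem MI_congr [Fintype α] [Fintype β] {α' β' : Type*} [Fintype α'] [Fintype β']
    {X : Ω → α} {X' : Ω → α'} {Y : Ω → β} {Y' : Ω → β'} (hX : SameFibers X X')
    (hY : SameFibers Y Y') : MI μ X Y = MI μ X' Y' := by
  rw [MI, MI, Hsh_congr μ hX, Hsh_congr μ hY, Hsh_congr μ (hX.prodMk hY)]

theorem CMI_comm [Fintype α] [Fintype β] [Fintype γ] (X : Ω → α) (Y : Ω → β) (Z : Ω → γ) :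
    CMI μ X Y Z = CMI μ Y X Z := by
  rw [CMI, CMI, Hsh_congr μ (X := fun ω => (X ω, Y ω, Z ω)) (X' := fun ω => (Y ω, X ω, Z ω))
    fun ω ω' => by simp only [Prod.mk.injEq]; tauto]
  ring

theorem CMI_eq_zero_of_const [Fintype α] [Fintype β] [Fintype γ] (X : Ω → α) {Y : Ω → β}
    (hY : ∀ ω ω', Y ω = Y ω') (Z : Ω → γ) : CMI μ X Y Z = 0 := by
  rw [CMI, Hsh_congr μ (X := fun ω => (Y ω, Z ω)) (X' := Z)
      fun ω ω' => by simp [hY ω ω'],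
    Hsh_congr μ (X := fun ω => (X ω, Y ω, Z ω)) (X' := fun ω => (X ω, Z ω))
      fun ω ω' => by simp [hY ω ω']]
  ring

theorem CMI_chain [Fintype α] [Fintype β] [Fintype γ] [Fintype δ]
    (X : Ω → α) (W : Ω → δ) (Y : Ω → β) (Z : Ω → γ) :
    CMI μ (fun ω => (X ω, W ω)) Y Z = CMI μ W Y Z + CMI μ X Y (fun ω => (W ω, Z ω)) := by
  rw [CMI, CMI, CMI,
    Hsh_congr μ (X := fun ω => ((X ω, W ω), Z ω)) (X' := fun ω => (X ω, W ω, Z ω))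
      fun ω ω' => by simp only [Prod.mk.injEq]; tauto,
    Hsh_congr μ (X := fun ω => (W ω, Y ω, Z ω)) (X' := fun ω => (Y ω, W ω, Z ω))
      fun ω ω' => by simp only [Prod.mk.injEq]; tauto,
    Hsh_congr μ (X := fun ω => ((X ω, W ω), Y ω, Z ω)) (X' := fun ω => (X ω, Y ω, W ω, Z ω))
      fun ω ω' => by simp only [Prod.mk.injEq]; tauto]
  ring

theorem CMI_chain_right [Fintype α] [Fintype β] [Fintype γ] [Fintype δ]
    (X : Ω → α) (A : Ω → β) (V : Ω → δ) (Z : Ω → γ) :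
    CMI μ X (fun ω => (A ω, V ω)) Z = CMI μ X V Z + CMI μ X A (fun ω => (V ω, Z ω)) := by
  rw [CMI_comm, CMI_chain, CMI_comm μ V, CMI_comm μ A]

theorem CMI_eq_sub_of_sameFibers [Fintype α] [Fintype β] [Fintype γ] [Fintype δ]
    {δ' : Type*} [Fintype δ'] (X : Ω → α) {A : Ω → β} {V : Ω → δ} {V' : Ω → δ'}
    (h : SameFibers (fun ω => (A ω, V ω)) V') (Z : Ω → γ) :
    CMI μ X A (fun ω => (V ω, Z ω)) = CMI μ X V' Z - CMI μ X V Z := by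
  rw [← CMI_congr μ .rfl h .rfl, CMI_chain_right]
  ring

theorem MI_chain [Fintype α] [Fintype β] [Fintype γ] (X : Ω → α) (Z : Ω → γ) (Y : Ω → β) :
    MI μ (fun ω => (X ω, Z ω)) Y = MI μ Z Y + CMI μ X Y Z := by
  rw [MI, MI, CMI,
    Hsh_congr μ (X := fun ω => (Z ω, Y ω)) (X' := fun ω => (Y ω, Z ω))
      fun ω ω' => by simp only [Prod.mk.injEq]; tauto,
    Hsh_congr μ (X := fun ω => ((X ω, Z ω), Y ω)) (X' := fun ω => (X ω, Y ω, Z ω))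
      fun ω ω' => by simp only [Prod.mk.injEq]; tauto]
  ring

theorem MI_eq_CMI_unit (h1 : ∑ ω, μ ω = 1) [Fintype α] [Fintype β] (X : Ω → α) (Y : Ω → β) :
    MI μ X Y = CMI μ X Y (fun _ => ()) := by
  have hunit : Hsh μ (fun _ => ()) = 0 := by simp [Hsh, pOf, h1]
  rw [MI, CMI, hunit, Hsh_congr μ (X := fun ω => (X ω, ())) (X' := X) fun ω ω' => by simp,
    Hsh_congr μ (X := fun ω => (Y ω, ())) (X' := Y) fun ω ω' => by simp,
    Hsh_congr μ (X := fun ω => (X ω, Y ω, ())) (X' := fun ω => (X ω, Y ω)) fun ω ω' => by simp]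
  ring

theorem MI_nonneg (hμ : IsProb μ) [Fintype α] [Fintype β] (X : Ω → α) (Y : Ω → β) :
    0 ≤ MI μ X Y := by
  rw [MI_eq_CMI_unit μ hμ.2]
  exact CMI_nonneg μ hμ.1 X Y _

theorem CMI_le_MI (hμ : IsProb μ) [Fintype α] [Fintype β] [Fintype γ]
    (X : Ω → α) (Y : Ω → β) (Z : Ω → γ) : CMI μ X Y Z ≤ MI μ (fun ω => (X ω, Z ω)) Y := by
  rw [MI_chain]
  linarith [MI_nonneg μ hμ Z Y]

theorem CMI_le_CMI_add_CMI (h0 : ∀ ω, 0 ≤ μ ω) [Fintype α] [Fintype β] [Fintype γ] [Fintype δ]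
    (X : Ω → α) (B : Ω → δ) (Y : Ω → β) (Z : Ω → γ) :
    CMI μ X Y Z ≤ CMI μ B Y Z + CMI μ X Y (fun ω => (B ω, Z ω)) := by
  have hswap : CMI μ (fun ω => (X ω, B ω)) Y Z = CMI μ (fun ω => (B ω, X ω)) Y Z :=
    CMI_congr μ (fun ω ω' => by simp only [Prod.mk.injEq]; tauto) .rfl .rfl
  rw [CMI_chain, CMI_chain] at hswap
  linarith [CMI_nonneg μ h0 B Y (fun ω => (X ω, Z ω))]

theorem CMI_add_CMI_le_MI (hμ : IsProb μ) [Fintype α] [Fintype β] [Fintype γ] [Fintype δ]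
    (A : Ω → α) (T : Ω → δ) (Y : Ω → β) (Z : Ω → γ) :
    CMI μ T Y Z + CMI μ A Y (fun ω => (T ω, Z ω))
      ≤ MI μ (fun ω => ((A ω, T ω), Z ω)) Y := by
  rw [← CMI_chain]
  exact CMI_le_MI μ hμ _ Y Z

end Entropy

section Mask

variable {Ω β : Type*} {n : ℕ}

-- Erasing (rather than dropping) the coordinates outside `s` gives all sub-vectors of `Y` one
-- type, so that prefixes and suffixes of every length form a single family of variables.
noncomputable def maskVar (s : Set (Fin n)) (Y : Ω → Fin n → β) (ω : Ω) (j : Fin n) :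
    Option β :=
  if j ∈ s then some (Y ω j) else none

-- With 0-based coordinates, `pastVar Y i` is the paper's `Y^{i-1}` and `futureVar Y (i + 1)` is
-- its `Y_{i+1}^n`.
noncomputable def pastVar (Y : Ω → Fin n → β) (k : ℕ) : Ω → Fin n → Option β :=
  maskVar {j | (j : ℕ) < k} Y

noncomputable def futureVar (Y : Ω → Fin n → β) (k : ℕ) : Ω → Fin n → Option β :=
  maskVar {j | k ≤ (j : ℕ)} Y

theorem maskVar_eq_maskVar_iff {s : Set (Fin n)} {Y : Ω → Fin n → β} {ω ω' : Ω} :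
    maskVar s Y ω = maskVar s Y ω' ↔ ∀ j ∈ s, Y ω j = Y ω' j := by
  simp only [funext_iff, maskVar]
  refine ⟨fun h j hj => by simpa [hj] using h j, fun h j => ?_⟩
  split_ifs with hj
  · rw [h j hj]
  · rfl

theorem sameFibers_maskVar_insert (Y : Ω → Fin n → β) (i : Fin n) (s : Set (Fin n)) :
    SameFibers (fun ω => (Y ω i, maskVar s Y ω)) (maskVar (insert i s) Y) := fun ω ω' => by
  simp only [Prod.mk.injEq, maskVar_eq_maskVar_iff, Set.forall_mem_insert]

theorem sameFibers_comp_maskVar {m : ℕ} (Y : Ω → Fin n → β) (e : Fin m → Fin n) :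
    SameFibers (fun ω => Y ω ∘ e) (maskVar (Set.range e) Y) := fun ω ω' => by
  simp only [maskVar_eq_maskVar_iff]
  simp [funext_iff]

theorem sameFibers_maskVar_univ (Y : Ω → Fin n → β) : SameFibers (maskVar Set.univ Y) Y :=
  fun ω ω' => by
    simp only [maskVar_eq_maskVar_iff]
    simp [funext_iff]

theorem maskVar_empty_eq (Y : Ω → Fin n → β) (ω ω' : Ω) : maskVar ∅ Y ω = maskVar ∅ Y ω' := by
  simp [maskVar_eq_maskVar_iff]

theorem sameFibers_pastVar_succ (Y : Ω → Fin n → β) (i : Fin n) :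
    SameFibers (fun ω => (Y ω i, pastVar Y i ω)) (pastVar Y (i + 1)) := by
  have hset : insert i {j : Fin n | (j : ℕ) < i} = {j : Fin n | (j : ℕ) < i + 1} := by
    ext j; simp [Fin.ext_iff]; omega
  rw [pastVar, pastVar, ← hset]
  exact sameFibers_maskVar_insert Y i _

theorem sameFibers_futureVar_succ (Y : Ω → Fin n → β) (i : Fin n) :
    SameFibers (fun ω => (Y ω i, futureVar Y (i + 1) ω)) (futureVar Y i) := by
  have hset : insert i {j : Fin n | (i : ℕ) + 1 ≤ j} = {j : Fin n | (i : ℕ) ≤ j} := by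
    ext j; simp [Fin.ext_iff]; omega
  rw [futureVar, futureVar, ← hset]
  exact sameFibers_maskVar_insert Y i _

theorem pastVar_zero_eq (Y : Ω → Fin n → β) (ω ω' : Ω) : pastVar Y 0 ω = pastVar Y 0 ω' := by
  simpa [pastVar] using maskVar_empty_eq Y ω ω'

theorem futureVar_length_eq (Y : Ω → Fin n → β) (ω ω' : Ω) :
    futureVar Y n ω = futureVar Y n ω' := by
  simp [futureVar, maskVar_eq_maskVar_iff]

theorem sameFibers_pastVar_self (Y : Ω → Fin n → β) : SameFibers (pastVar Y n) Y := by
  simpa [pastVar] using sameFibers_maskVar_univ Y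

theorem sameFibers_futureVar_zero (Y : Ω → Fin n → β) : SameFibers (futureVar Y 0) Y := by
  simpa [futureVar] using sameFibers_maskVar_univ Y

theorem sameFibers_pastVar {k : ℕ} (hk : k ≤ n) (Y : Ω → Fin n → β) :
    SameFibers (fun ω (j : Fin k) => Y ω ⟨j, by omega⟩) (pastVar Y k) := by
  have hrange :
      Set.range (fun j : Fin k => (⟨j, by omega⟩ : Fin n)) = {j : Fin n | (j : ℕ) < k} := by
    ext j
    exact ⟨by rintro ⟨j, rfl⟩; exact j.isLt, fun hj => ⟨⟨j, hj⟩, rfl⟩⟩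
  rw [pastVar, ← hrange]
  exact sameFibers_comp_maskVar Y _

theorem sameFibers_futureVar (k : ℕ) (Y : Ω → Fin n → β) :
    SameFibers (fun ω (j : Fin (n - k)) => Y ω ⟨k + j, by omega⟩) (futureVar Y k) := by
  have hrange : Set.range (fun j : Fin (n - k) => (⟨k + j, by omega⟩ : Fin n))
      = {j : Fin n | k ≤ (j : ℕ)} := by
    ext j
    refine ⟨by rintro ⟨j, rfl⟩; exact Nat.le_add_right _ _, fun (hj : k ≤ (j : ℕ)) => ?_⟩
    exact ⟨⟨j - k, by have := j.isLt; omega⟩, by ext; simp; omega⟩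
  rw [futureVar, ← hrange]
  exact sameFibers_comp_maskVar Y _

end Mask

section ChainRule

variable {Ω α β γ : Type*} [Fintype Ω] [Fintype α] [Fintype β] [Fintype γ] (μ : Ω → ℝ) {n : ℕ}

theorem CMI_eq_sum_pastVar (X : Ω → α) (Y : Ω → Fin n → β) (Z : Ω → γ) :
    CMI μ X Y Z = ∑ i : Fin n, CMI μ X (fun ω => Y ω i) (fun ω => (pastVar Y i ω, Z ω)) := by
  let g k := CMI μ X (pastVar Y k) Z
  have hstep (i : Fin n) :
      CMI μ X (fun ω => Y ω i) (fun ω => (pastVar Y i ω, Z ω)) = g (i + 1) - g i :=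
    CMI_eq_sub_of_sameFibers μ X (sameFibers_pastVar_succ Y i) Z
  rw [sum_congr rfl fun i _ => hstep i, Fin.sum_univ_eq_sum_range (fun k => g (k + 1) - g k),
    sum_range_sub]
  simp only [g]
  rw [CMI_congr μ .rfl (sameFibers_pastVar_self Y) .rfl,
    CMI_comm μ X, CMI_eq_zero_of_const μ _ (pastVar_zero_eq Y), sub_zero]

theorem CMI_eq_sum_futureVar (X : Ω → α) (Y : Ω → Fin n → β) (Z : Ω → γ) :
    CMI μ X Y Z
      = ∑ i : Fin n, CMI μ X (fun ω => Y ω i) (fun ω => (futureVar Y (i + 1) ω, Z ω)) := by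
  let g k := CMI μ X (futureVar Y k) Z
  have hstep (i : Fin n) :
      CMI μ X (fun ω => Y ω i) (fun ω => (futureVar Y (i + 1) ω, Z ω)) = g i - g (i + 1) :=
    CMI_eq_sub_of_sameFibers μ X (sameFibers_futureVar_succ Y i) Z
  rw [sum_congr rfl fun i _ => hstep i, Fin.sum_univ_eq_sum_range (fun k => g k - g (k + 1)),
    sum_range_sub']
  simp only [g]
  rw [CMI_congr μ .rfl (sameFibers_futureVar_zero Y) .rfl,
    CMI_comm μ X, CMI_eq_zero_of_const μ _ (futureVar_length_eq Y), sub_zero]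

end ChainRule

section Letterization

variable {Ω α β₁ β₂ γ : Type*} [Fintype Ω] [Fintype α] [Fintype β₁] [Fintype β₂]
  [Fintype γ] (μ : Ω → ℝ) {n : ℕ}

theorem sum_CMI_futureVar_eq_sum_CMI_pastVar (W : Ω → γ) (Y1 : Ω → Fin n → β₁)
    (Y2 : Ω → Fin n → β₂) :
    ∑ i : Fin n, CMI μ (futureVar Y2 (i + 1)) (fun ω => Y1 ω i)
        (fun ω => (pastVar Y1 i ω, W ω))
      = ∑ i : Fin n, CMI μ (pastVar Y1 i) (fun ω => Y2 ω i)
        (fun ω => (futureVar Y2 (i + 1) ω, W ω)) := by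
  -- Both summands are increments of `F`; their difference telescopes along the diagonal.
  let F a b := CMI μ (futureVar Y2 a) (pastVar Y1 b) W
  have hstep (i : Fin n) :
      CMI μ (futureVar Y2 (i + 1)) (fun ω => Y1 ω i) (fun ω => (pastVar Y1 i ω, W ω))
        - CMI μ (pastVar Y1 i) (fun ω => Y2 ω i) (fun ω => (futureVar Y2 (i + 1) ω, W ω))
      = F (i + 1) (i + 1) - F i i := by
    rw [CMI_eq_sub_of_sameFibers μ _ (sameFibers_pastVar_succ Y1 i) W,
      CMI_eq_sub_of_sameFibers μ _ (sameFibers_futureVar_succ Y2 i) W,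
      CMI_comm μ (pastVar Y1 i) (futureVar Y2 i), CMI_comm μ (pastVar Y1 i)]
    ring
  rw [← sub_eq_zero, ← sum_sub_distrib, sum_congr rfl fun i _ => hstep i,
    Fin.sum_univ_eq_sum_range (fun k => F (k + 1) (k + 1) - F k k),
    sum_range_sub fun k => F k k]
  simp only [F]
  rw [CMI_comm, CMI_eq_zero_of_const μ _ (futureVar_length_eq Y2),
    CMI_eq_zero_of_const μ _ (pastVar_zero_eq Y1), sub_zero]

theorem CMI_add_CMI_le_sum_CMI_add_MI (hμ : IsProb μ) {τ ι ε : Type*} [Fintype τ] [Fintype ι]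
    [Fintype ε] {υ : Fin n → Type*} [∀ i, Fintype (υ i)] (X : Ω → α) (T : Ω → τ)
    (M : Ω → ι) {W : Ω → ε} (Y1 : Ω → Fin n → β₁) (Y2 : Ω → Fin n → β₂) {U : ∀ i, Ω → υ i}
    (hW : SameFibers W (fun ω => (T ω, M ω)))
    (hU : ∀ i : Fin n,
      SameFibers (U i) (fun ω => (T ω, M ω, pastVar Y1 i ω, futureVar Y2 (i + 1) ω))) :
    CMI μ X Y1 W + CMI μ T Y2 M
      ≤ ∑ i : Fin n, (CMI μ X (fun ω => Y1 ω i) (U i) + MI μ (U i) (fun ω => Y2 ω i)) := by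
  have hX (i : Fin n) :
      CMI μ X (fun ω => Y1 ω i) (fun ω => (pastVar Y1 i ω, W ω))
        ≤ CMI μ (futureVar Y2 (i + 1)) (fun ω => Y1 ω i) (fun ω => (pastVar Y1 i ω, W ω))
          + CMI μ X (fun ω => Y1 ω i) (U i) := by
    refine (CMI_le_CMI_add_CMI μ hμ.1 _ _ _ _).trans_eq (congrArg _ (CMI_congr μ .rfl .rfl ?_))
    intro ω ω'
    rw [hU i ω ω']
    simp only [Prod.mk.injEq, hW ω ω']
    tauto
  have hT (i : Fin n) :
      CMI μ T (fun ω => Y2 ω i) (fun ω => (futureVar Y2 (i + 1) ω, M ω))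
        + CMI μ (pastVar Y1 i) (fun ω => Y2 ω i) (fun ω => (futureVar Y2 (i + 1) ω, W ω))
        ≤ MI μ (U i) (fun ω => Y2 ω i) := by
    rw [CMI_congr μ .rfl .rfl (Z := fun ω => (futureVar Y2 (i + 1) ω, W ω))
      (Z' := fun ω => (T ω, futureVar Y2 (i + 1) ω, M ω))
      fun ω ω' => by simp only [Prod.mk.injEq, hW ω ω']; tauto]
    refine (CMI_add_CMI_le_MI μ hμ _ _ _ _).trans_eq (MI_congr μ ?_ .rfl)
    intro ω ω'
    rw [hU i ω ω']
    simp only [Prod.mk.injEq]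
    tauto
  have hcsiszar := sum_CMI_futureVar_eq_sum_CMI_pastVar μ W Y1 Y2
  have hXsum := sum_le_sum fun i (_ : i ∈ univ) => hX i
  have hTsum := sum_le_sum fun i (_ : i ∈ univ) => hT i
  rw [sum_add_distrib] at hXsum hTsum
  rw [CMI_eq_sum_pastVar μ X Y1 W, CMI_eq_sum_futureVar μ T Y2 M, sum_add_distrib]
  linarith

end Letterization

/-- single-letterization in the more capable converse,
with `Uᵢ = (M1, M3, M4, M5, Y1^{i-1}, Y2_{i+1}^n)`. -/
theorem stmt12 {Ω α₁ α₂ α₃ α₄ α₅ β₁ β₂ : Type*} [Fintype Ω]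
    [Fintype α₁] [Fintype α₂] [Fintype α₃] [Fintype α₄] [Fintype α₅]
    [Fintype β₁] [Fintype β₂]
    (μ : Ω → ℝ) (hμ : IsProb μ) (n : ℕ)
    (M1 : Ω → α₁) (M2 : Ω → α₂) (M3 : Ω → α₃) (M4 : Ω → α₄) (M5 : Ω → α₅)
    (Y1 : Ω → Fin n → β₁) (Y2 : Ω → Fin n → β₂) :
    CMI μ M2 Y1 (fun ω => (M1 ω, M3 ω, M4 ω, M5 ω))
      + CMI μ (fun ω => (M1 ω, M3 ω, M5 ω)) Y2 M4
    ≤ ∑ i : Fin n,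
        (CMI μ M2 (fun ω => Y1 ω i)
          (fun ω => (M1 ω, M3 ω, M4 ω, M5 ω,
            (fun j : Fin i.val =>
              Y1 ω ⟨j.val, by have h1 := j.isLt; have h2 := i.isLt; omega⟩),
            (fun j : Fin (n - (i.val + 1)) =>
              Y2 ω ⟨i.val + 1 + j.val, by have h1 := j.isLt; have h2 := i.isLt; omega⟩)))
        + MI μ
          (fun ω => (M1 ω, M3 ω, M4 ω, M5 ω,
            (fun j : Fin i.val =>
              Y1 ω ⟨j.val, by have h1 := j.isLt; have h2 := i.isLt; omega⟩),
            (fun j : Fin (n - (i.val + 1)) =>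
              Y2 ω ⟨i.val + 1 + j.val, by have h1 := j.isLt; have h2 := i.isLt; omega⟩)))
          (fun ω => Y2 ω i)) := by
  refine CMI_add_CMI_le_sum_CMI_add_MI μ hμ M2 (fun ω => (M1 ω, M3 ω, M5 ω)) M4 Y1 Y2
    (fun ω ω' => by simp only [Prod.mk.injEq]; tauto) fun i ω ω' => ?_
  have hpast := sameFibers_pastVar i.isLt.le Y1 ω ω'
  have hfuture := sameFibers_futureVar (i + 1) Y2 ω ω'
  simp only [Prod.mk.injEq] at hpast hfuture ⊢
  rw [← hpast, ← hfuture]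
  tauto
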